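/- arXiv:2103.11032 — 6 statements merged into one kernel-verified Lean document; each statement's English description precedes it below -/
import Mathlib

section
/- For any lattice L of full rank in ℝ^m, there exists ε(L) > 0 such that: if F ∈ GL(m, ℝ) satisfies F L F^{-1} = L (i.e. F maps L bijectively onto L) and |⟨F(X), F(Y)⟩ − ⟨X, Y⟩| ≤ ε(L)‖X‖‖Y‖ for all X, Y ∈ ℝ^m, then F is orthogonal. -/
/-!
A map preserving the lattice `L = ℤ b₁ ⊕ ⋯ ⊕ ℤ bₘ` whose inner-product distortion is at most
`‖X‖ ‖Y‖` sends each `bᵢ` to a lattice point of norm at most `2 ‖bᵢ‖`. There are finitely many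
such lattice points, and a linear map is determined by the images of the `bᵢ`, so only finitely
many maps qualify. Each non-orthogonal one violates the `ε`-bound for all small `ε`, and a finite
intersection of such conditions on `ε` still holds for some `ε > 0`.
-/

open Filter Topology Metric

theorem Set.Finite.setOf_forall_apply_basis_mem {R M N ι : Type*} [Semiring R]
    [AddCommMonoid M] [Module R M] [AddCommMonoid N] [Module R N] [Finite ι]
    (b : Module.Basis ι R M) {T : ι → Set N} (hT : ∀ i, (T i).Finite) :
    {f : M →ₗ[R] N | ∀ i, f (b i) ∈ T i}.Finite :=
  ((Set.Finite.pi hT).preimage (f := fun (f : M →ₗ[R] N) i => f (b i))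
    fun _ _ _ _ hfg => b.ext fun i => congrFun hfg i).subset fun _ hf i _ => hf i

section InnerProductSpace

variable {E : Type*} [NormedAddCommGroup E] [InnerProductSpace ℝ E]

theorem norm_le_two_mul_of_abs_inner_self_sub_le {u v : E}
    (h : |(inner ℝ u u : ℝ) - inner ℝ v v| ≤ ‖v‖ * ‖v‖) : ‖u‖ ≤ 2 * ‖v‖ := by
  rw [real_inner_self_eq_norm_mul_norm, real_inner_self_eq_norm_mul_norm] at h
  nlinarith [(abs_le.1 h).2, norm_nonneg u, norm_nonneg v]

theorem eventually_exists_mul_norm_lt_abs_inner_sub {f : E → E}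
    (hf : ¬ ∀ X Y, (inner ℝ (f X) (f Y) : ℝ) = inner ℝ X Y) :
    ∀ᶠ ε in 𝓝 (0 : ℝ), ∃ X Y : E,
      ε * ‖X‖ * ‖Y‖ < |(inner ℝ (f X) (f Y) : ℝ) - inner ℝ X Y| := by
  push Not at hf
  obtain ⟨X, Y, hXY⟩ := hf
  have hlim : Tendsto (fun ε : ℝ => ε * ‖X‖ * ‖Y‖) (𝓝 0) (𝓝 0) := by
    simpa using ((tendsto_id (x := 𝓝 (0 : ℝ))).mul_const ‖X‖).mul_const ‖Y‖
  exact (hlim.eventually_lt_const (abs_pos.2 (sub_ne_zero.2 hXY))).mono fun ε hε => ⟨X, Y, hε⟩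

end InnerProductSpace

theorem ZSpan.setFinite_linearEquiv_apply_basis_mem {E ι : Type*} [NormedAddCommGroup E]
    [NormedSpace ℝ E] [ProperSpace E] [Finite ι] (b : Module.Basis ι ℝ E) (r : ι → ℝ) :
    {F : E ≃ₗ[ℝ] E | ∀ i, F (b i) ∈ closedBall 0 (r i) ∩ Submodule.span ℤ (Set.range b)}.Finite :=
  (Set.Finite.setOf_forall_apply_basis_mem b fun _ => ZSpan.setFinite_inter b isBounded_closedBall
    ).preimage LinearEquiv.toLinearMap_injective.injOn

/-- For any full-rank lattice `L ⊆ ℝ^m` (generated by a basis `b`),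
there is `ε(L) > 0` such that every linear automorphism `F` preserving `L` and
satisfying `|⟨FX, FY⟩ − ⟨X, Y⟩| ≤ ε‖X‖‖Y‖` for all `X, Y` is orthogonal. -/
theorem stmt2 (m : ℕ) (b : Module.Basis (Fin m) ℝ (EuclideanSpace ℝ (Fin m))) :
    ∃ ε : ℝ, 0 < ε ∧
      ∀ F : EuclideanSpace ℝ (Fin m) ≃ₗ[ℝ] EuclideanSpace ℝ (Fin m),
        (∀ x, x ∈ AddSubgroup.closure (Set.range ⇑b) ↔
              F x ∈ AddSubgroup.closure (Set.range ⇑b)) →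
        (∀ X Y, |(inner ℝ (F X) (F Y) : ℝ) - (inner ℝ X Y : ℝ)| ≤ ε * ‖X‖ * ‖Y‖) →
        ∀ X Y, (inner ℝ (F X) (F Y) : ℝ) = (inner ℝ X Y : ℝ) := by
  set candidates := {F : EuclideanSpace ℝ (Fin m) ≃ₗ[ℝ] EuclideanSpace ℝ (Fin m) |
    ∀ i, F (b i) ∈ closedBall 0 (2 * ‖b i‖) ∩ Submodule.span ℤ (Set.range b)}
  set bad := {F ∈ candidates | ¬ ∀ X Y, (inner ℝ (F X) (F Y) : ℝ) = inner ℝ X Y}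
  have hbad : bad.Finite :=
    (ZSpan.setFinite_linearEquiv_apply_basis_mem b _).subset fun _ hF => hF.1
  have hsmall : ∀ᶠ ε in 𝓝[>] (0 : ℝ), (ε ≤ 1 ∧ ∀ F ∈ bad, ∃ X Y,
      ε * ‖X‖ * ‖Y‖ < |(inner ℝ (F X) (F Y) : ℝ) - inner ℝ X Y|) ∧ 0 < ε :=
    ((eventually_le_nhds one_pos).and (hbad.eventually_all.2 fun F hF =>
      eventually_exists_mul_norm_lt_abs_inner_sub hF.2)).filter_mono nhdsWithin_le_nhds
      |>.and self_mem_nhdsWithin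
  obtain ⟨ε, ⟨hε1, hεbad⟩, hε⟩ := hsmall.exists
  refine ⟨ε, hε, fun F hlat hbnd => by_contra fun hF => ?_⟩
  have hcand : F ∈ candidates := fun i => by
    refine ⟨mem_closedBall_zero_iff.2 (norm_le_two_mul_of_abs_inner_self_sub_le ?_), ?_⟩
    · exact (hbnd _ _).trans (by gcongr; exact mul_le_of_le_one_left (norm_nonneg _) hε1)
    · rw [SetLike.mem_coe, ← Submodule.mem_toAddSubgroup, Submodule.span_int_eq_addSubgroupClosure]
      exact (hlat (b i)).1 (AddSubgroup.subset_closure ⟨i, rfl⟩)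
  obtain ⟨X, Y, hXY⟩ := hεbad F ⟨hcand, hF⟩
  exact (hXY.trans_le (hbnd X Y)).false
end

section
/- Let U ⊆ ℝ^n be open and f : U → ℝ^m be analytic. Assume that for any two distinct points x, y ∈ U the Taylor series of f at x and at y do not coincide. Then for every x₀ ∈ U there exists k ∈ ℕ such that the map T_k f := (f, df, d²f, …, d^k f) has injective differential at x₀. -/
/-!
If `X` lies in the kernel of `d_{x₀}(D^k f)` for every `k`, then each `t ↦ D^k f (x₀ + t X) v` is
analytic with all derivatives of positive order vanishing at `0`: the `j`-th one is
`D^{k+j} f (x₀)` with `X` in `j` slots, i.e. a value of `d_{x₀}(D^{k+j-1} f) X = 0`. So the whole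
Taylor series of `f` is constant along the line near `x₀`, and separation forces `X = 0`.
The kernels of the truncated jets `d_{x₀}(T_k f)` form a descending chain of subspaces of a
finite-dimensional space, so their intersection `0` is already reached at a finite `k`.
-/

open Filter Topology Set

theorem exists_injective_pi_of_forall_eq_zero {R M : Type*} [Ring R] [AddCommGroup M]
    [Module R M] [IsArtinian R M] {N : ℕ → Type*} [∀ i, AddCommGroup (N i)] [∀ i, Module R (N i)]
    (L : ∀ i, M →ₗ[R] N i) (hL : ∀ x, (∀ i, L i x = 0) → x = 0) :
    ∃ k, Function.Injective fun x (i : Fin (k + 1)) => L i x := by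
  set W : ℕ → Submodule R M := fun k => ⨅ i ≤ k, LinearMap.ker (L i)
  have hW : Antitone W := fun k l hkl => biInf_mono fun i hi => hi.trans hkl
  obtain ⟨k, hk⟩ : ∃ k, ∀ m, k ≤ m → W k = W m :=
    IsArtinian.monotone_stabilizes ⟨_, hW.dual_right⟩
  refine ⟨k, show Function.Injective (LinearMap.pi fun i : Fin (k + 1) => L i) from ?_⟩
  rw [← LinearMap.ker_eq_bot, LinearMap.ker_pi, eq_bot_iff]
  intro x hx
  refine (Submodule.mem_bot R).2 (hL x fun i => ?_)
  have hxW : x ∈ W (max k i) := by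
    rw [← hk _ (le_max_left k i)]
    simp only [W, Submodule.mem_iInf] at hx ⊢
    exact fun j hj => hx ⟨j, Nat.lt_succ_of_le hj⟩
  simp only [W, Submodule.mem_iInf] at hxW
  exact hxW i (le_max_right k i)

section OneVariable

variable {𝕜 F : Type*} [NontriviallyNormedField 𝕜] [CharZero 𝕜] [NormedAddCommGroup F]
  [NormedSpace 𝕜 F] [CompleteSpace F] {φ : 𝕜 → F} {a : 𝕜}

theorem AnalyticAt.eventuallyEq_const_of_iteratedDeriv_succ_eq_zero (hφ : AnalyticAt 𝕜 φ a)
    (h : ∀ i, iteratedDeriv (i + 1) φ a = 0) : φ =ᶠ[𝓝 a] fun _ => φ a := by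
  have hψ : AnalyticAt 𝕜 (fun t => -φ a + φ t) a := analyticAt_const.add hφ
  have htop : analyticOrderAt (fun t => -φ a + φ t) a = ⊤ := by
    refine ENat.eq_top_iff_forall_ge.2 fun n =>
      (natCast_le_analyticOrderAt_iff_iteratedDeriv_eq_zero hψ).2 fun i _ => ?_
    cases i with
    | zero => simp
    | succ i => rw [iteratedDeriv_const_add i.succ_pos, h i]
  filter_upwards [analyticOrderAt_eq_top.1 htop] with t ht
  exact (neg_add_eq_zero.1 ht).symm

theorem AnalyticOnNhd.eqOn_const_of_iteratedDeriv_succ_eq_zero {s : Set 𝕜}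
    (hφ : AnalyticOnNhd 𝕜 φ s) (hs : IsPreconnected s) (ha : a ∈ s)
    (h : ∀ i, iteratedDeriv (i + 1) φ a = 0) : EqOn φ (fun _ => φ a) s :=
  hφ.eqOn_of_preconnected_of_eventuallyEq analyticOnNhd_const hs ha
    ((hφ a ha).eventuallyEq_const_of_iteratedDeriv_succ_eq_zero h)

end OneVariable

section Line

variable {𝕜 E F : Type*} [RCLike 𝕜] [NormedAddCommGroup E] [NormedSpace 𝕜 E]
  [NormedAddCommGroup F] [NormedSpace 𝕜 F] {f : E → F} {U : Set E} {x₀ X : E}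

theorem IsOpen.eventually_add_smul_mem (hU : IsOpen U) (hx₀ : x₀ ∈ U) :
    ∀ᶠ t in 𝓝 (0 : 𝕜), x₀ + t • X ∈ U :=
  ((continuous_const.add (continuous_id.smul continuous_const)).tendsto' (0 : 𝕜) x₀
    (by simp)).eventually (hU.mem_nhds hx₀)

theorem hasDerivAt_iteratedFDeriv_add_smul_apply {k : ℕ} (v : Fin k → E) {t : 𝕜}
    (hf : DifferentiableAt 𝕜 (iteratedFDeriv 𝕜 k f) (x₀ + t • X)) :
    HasDerivAt (fun s : 𝕜 => iteratedFDeriv 𝕜 k f (x₀ + s • X) v)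
      (iteratedFDeriv 𝕜 (k + 1) f (x₀ + t • X) (Fin.cons X v)) t := by
  have hline : HasDerivAt (fun s : 𝕜 => x₀ + s • X) X t := by
    simpa using ((hasDerivAt_id t).smul_const X).const_add x₀
  rw [iteratedFDeriv_succ_apply_left, Fin.cons_zero, Fin.tail_cons]
  exact (ContinuousMultilinearMap.apply 𝕜 _ F v).hasFDerivAt.comp_hasDerivAt t
    (hf.hasFDerivAt.comp_hasDerivAt t hline)

variable [CompleteSpace F]

theorem AnalyticOnNhd.iteratedDeriv_succ_iteratedFDeriv_add_smul_apply_eq_zero (hU : IsOpen U)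
    (hf : AnalyticOnNhd 𝕜 f U) (hx₀ : x₀ ∈ U)
    (hX : ∀ k, fderiv 𝕜 (iteratedFDeriv 𝕜 k f) x₀ X = 0) (i k : ℕ) (v : Fin k → E) :
    iteratedDeriv (i + 1) (fun t : 𝕜 => iteratedFDeriv 𝕜 k f (x₀ + t • X) v) 0 = 0 := by
  have hderiv : ∀ k (v : Fin k → E), deriv (fun t : 𝕜 => iteratedFDeriv 𝕜 k f (x₀ + t • X) v)
      =ᶠ[𝓝 (0 : 𝕜)] fun t => iteratedFDeriv 𝕜 (k + 1) f (x₀ + t • X) (Fin.cons X v) := by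
    intro k v
    filter_upwards [hU.eventually_add_smul_mem hx₀] with t ht
    exact (hasDerivAt_iteratedFDeriv_add_smul_apply v
      (hf.iteratedFDeriv k _ ht).differentiableAt).deriv
  induction i generalizing k with
  | zero =>
    rw [iteratedDeriv_one, (hderiv k v).eq_of_nhds]
    simp [iteratedFDeriv_succ_apply_left, hX]
  | succ i ih =>
    rw [iteratedDeriv_succ', ((hderiv k v).iteratedDeriv (i + 1)).eq_of_nhds]
    exact ih (k + 1) (Fin.cons X v)

theorem AnalyticOnNhd.eventually_iteratedFDeriv_add_smul_eq (hU : IsOpen U)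
    (hf : AnalyticOnNhd 𝕜 f U) (hx₀ : x₀ ∈ U)
    (hX : ∀ k, fderiv 𝕜 (iteratedFDeriv 𝕜 k f) x₀ X = 0) :
    ∀ᶠ t in 𝓝 (0 : 𝕜), ∀ k, iteratedFDeriv 𝕜 k f (x₀ + t • X) = iteratedFDeriv 𝕜 k f x₀ := by
  obtain ⟨ε, hε, hball⟩ :=
    Metric.mem_nhds_iff.1 (hU.eventually_add_smul_mem (𝕜 := 𝕜) (X := X) hx₀)
  filter_upwards [Metric.ball_mem_nhds 0 hε] with t ht k
  ext v
  have hφ : AnalyticOnNhd 𝕜 (fun s : 𝕜 => iteratedFDeriv 𝕜 k f (x₀ + s • X) v)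
      (Metric.ball 0 ε) := fun s hs =>
    ((ContinuousMultilinearMap.apply 𝕜 _ F v).analyticAt _).comp
      (AnalyticAt.comp (g := iteratedFDeriv 𝕜 k f) (hf.iteratedFDeriv k _ (hball hs))
        (by fun_prop))
  simpa using hφ.eqOn_const_of_iteratedDeriv_succ_eq_zero Metric.isPreconnected_ball
    (Metric.mem_ball_self hε)
    (fun i => hf.iteratedDeriv_succ_iteratedFDeriv_add_smul_apply_eq_zero hU hx₀ hX i k v) ht

end Line

/-- Let `U ⊆ ℝ^n` be open and `f : U → ℝ^m` analytic such that the
Taylor series of `f` at any two distinct points of `U` differ. Then for every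
`x₀ ∈ U` there is `k` such that the `k`-jet map `T_k f = (f, df, …, d^k f)` has
injective differential at `x₀`. -/
theorem stmt4 (n m : ℕ) (U : Set (EuclideanSpace ℝ (Fin n))) (hU : IsOpen U)
    (f : EuclideanSpace ℝ (Fin n) → EuclideanSpace ℝ (Fin m))
    (hf : AnalyticOnNhd ℝ f U)
    (hsep : ∀ x ∈ U, ∀ y ∈ U, x ≠ y →
      ∃ k : ℕ, iteratedFDeriv ℝ k f x ≠ iteratedFDeriv ℝ k f y) :
    ∀ x₀ ∈ U, ∃ k : ℕ,
      Function.Injective (fun X : EuclideanSpace ℝ (Fin n) =>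
        (fun i : Fin (k + 1) => fderiv ℝ (iteratedFDeriv ℝ (i : ℕ) f) x₀ X)) := by
  intro x₀ hx₀
  refine exists_injective_pi_of_forall_eq_zero
    (fun i => (fderiv ℝ (iteratedFDeriv ℝ i f) x₀).toLinearMap) fun X hX => ?_
  by_contra hX0
  have hline : ∀ᶠ t in 𝓝[≠] (0 : ℝ), t ≠ 0 ∧ x₀ + t • X ∈ U ∧
      ∀ k, iteratedFDeriv ℝ k f (x₀ + t • X) = iteratedFDeriv ℝ k f x₀ :=
    eventually_mem_nhdsWithin.and <| eventually_nhdsWithin_of_eventually_nhds <|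
      (hU.eventually_add_smul_mem hx₀).and (hf.eventually_iteratedFDeriv_add_smul_eq hU hx₀ hX)
  obtain ⟨t, ht0, htU, hjet⟩ := hline.exists
  obtain ⟨k, hk⟩ := hsep x₀ hx₀ (x₀ + t • X) htU (by simpa [ht0] using hX0)
  exact hk (hjet k).symm
end

section
/- Let Γ = L₃ ⋊ ℤ/2ℤ where ℤ/2ℤ acts on the integral Heisenberg group L₃ by the automorphism H_{x,y,z} ↦ H_{−x,−y,z}. Then the abelianization Γ/[Γ,Γ] is isomorphic to (ℤ/2ℤ)³. -/
/-!
The parity map `H_{x,y,z} tᵉ ↦ (x mod 2, y mod 2, ε)` is a surjective homomorphism onto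
`(ℤ/2)³`, so it suffices to see that every element with `x`, `y` even and `ε = 0` is a product
of commutators. Conjugation by `t` negates `x` and `y`, so `⁅t, H_{-m,-n,0}⁆ = H_{2m,2n,2mn}`,
and the centre consists of commutators, `⁅H_{z,0,0}, H_{0,1,0}⁆ = H_{0,0,z}`.
-/

noncomputable def Abelianization.mulEquivOfSurjective {G A : Type*} [Group G] [CommGroup A]
    (φ : G →* A) (hφ : Function.Surjective φ) (hker : φ.ker ≤ commutator G) :
    Abelianization G ≃* A :=
  (QuotientGroup.quotientMulEquivOfEq
      (le_antisymm (Abelianization.commutator_subset_ker φ) hker)).trans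
    (QuotientGroup.quotientKerEquivOfSurjective φ hφ)

/-- `f` identifies `G` with `L₃ ⋊ ℤ/2`, the pair `((x, y, z), ε)` standing for
`H_{x,y,z} tᵉ`. -/
def IsHeisenbergSemidirect {G : Type*} [Group G] (f : (ℤ × ℤ × ℤ) × ZMod 2 ≃ G) : Prop :=
  ∀ (x y z x' y' z' : ℤ) (ε ε' : ZMod 2),
    f ((x, y, z), ε) * f ((x', y', z'), ε') =
      f ((x + (if ε = 0 then (1 : ℤ) else -1) * x',
          y + (if ε = 0 then (1 : ℤ) else -1) * y',
          z + z' + x * ((if ε = 0 then (1 : ℤ) else -1) * y')), ε + ε')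

open scoped commutatorElement

namespace IsHeisenbergSemidirect

variable {G : Type*} [Group G] {f : (ℤ × ℤ × ℤ) × ZMod 2 ≃ G}

theorem apply_zero (hf : IsHeisenbergSemidirect f) : f ((0, 0, 0), 0) = 1 := by
  simpa using hf 0 0 0 0 0 0 0 0

theorem inv_apply (hf : IsHeisenbergSemidirect f) (x y z : ℤ) (ε : ZMod 2) :
    (f ((x, y, z), ε))⁻¹ =
      f ((-(if ε = 0 then (1 : ℤ) else -1) * x, -(if ε = 0 then (1 : ℤ) else -1) * y,
        x * y - z), ε) := by
  refine inv_eq_of_mul_eq_one_right ?_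
  rw [hf, ← hf.apply_zero]
  obtain rfl | rfl : ε = 0 ∨ ε = 1 := by decide +revert
  · simp
  · simp [CharTwo.add_self_eq_zero]

theorem commutator_generator_apply (hf : IsHeisenbergSemidirect f) (x y : ℤ) :
    ⁅f ((0, 0, 0), 1), f ((x, y, 0), 0)⁆ = f ((-2 * x, -2 * y, 2 * x * y), 0) := by
  rw [commutatorElement_def, hf.inv_apply, hf.inv_apply, hf, hf, hf]
  simp only [zero_add, add_zero, CharTwo.add_self_eq_zero]
  norm_num
  refine ⟨?_, ?_, ?_⟩ <;> ring

theorem commutator_central_apply (hf : IsHeisenbergSemidirect f) (z : ℤ) :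
    ⁅f ((z, 0, 0), 0), f ((0, 1, 0), 0)⁆ = f ((0, 0, z), 0) := by
  rw [commutatorElement_def, hf.inv_apply, hf.inv_apply, hf, hf, hf]
  norm_num

theorem apply_mem_commutator (hf : IsHeisenbergSemidirect f) {x y : ℤ} (hx : Even x)
    (hy : Even y) (z : ℤ) : f ((x, y, z), 0) ∈ commutator G := by
  obtain ⟨m, rfl⟩ := hx
  obtain ⟨n, rfl⟩ := hy
  have hsplit : f ((m + m, n + n, z), 0) =
      ⁅f ((0, 0, 0), 1), f ((-m, -n, 0), 0)⁆ *
        ⁅f ((z - 2 * m * n, 0, 0), 0), f ((0, 1, 0), 0)⁆ := by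
    rw [hf.commutator_generator_apply, hf.commutator_central_apply, hf]
    norm_num
    constructor <;> ring
  rw [hsplit]
  exact mul_mem (Subgroup.commutator_mem_commutator trivial trivial)
    (Subgroup.commutator_mem_commutator trivial trivial)

def parityHom (hf : IsHeisenbergSemidirect f) :
    G →* Multiplicative (ZMod 2 × ZMod 2 × ZMod 2) :=
  MonoidHom.mk' (fun g ↦ Multiplicative.ofAdd
      (((f.symm g).1.1 : ZMod 2), ((f.symm g).1.2.1 : ZMod 2), (f.symm g).2)) <| by
    intro g h
    obtain ⟨⟨⟨x, y, z⟩, ε⟩, rfl⟩ := f.surjective g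
    obtain ⟨⟨⟨x', y', z'⟩, ε'⟩, rfl⟩ := f.surjective h
    have hsign : ((if ε = 0 then (1 : ℤ) else -1 : ℤ) : ZMod 2) = 1 := by
      split_ifs <;> decide
    rw [hf]
    simp only [Equiv.symm_apply_apply, Int.cast_add, Int.cast_mul, hsign, one_mul]
    rfl

theorem parityHom_apply (hf : IsHeisenbergSemidirect f) (x y z : ℤ) (ε : ZMod 2) :
    hf.parityHom (f ((x, y, z), ε)) = Multiplicative.ofAdd ((x : ZMod 2), (y : ZMod 2), ε) := by
  simp [parityHom]

theorem parityHom_surjective (hf : IsHeisenbergSemidirect f) :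
    Function.Surjective hf.parityHom := by
  rintro ⟨a, b, ε⟩
  refine ⟨f ((a.val, b.val, 0), ε), ?_⟩
  rw [parityHom_apply]
  simp only [Int.cast_natCast, ZMod.natCast_zmod_val]
  rfl

theorem ker_parityHom_le (hf : IsHeisenbergSemidirect f) : hf.parityHom.ker ≤ commutator G := by
  intro g hg
  obtain ⟨⟨⟨x, y, z⟩, ε⟩, rfl⟩ := f.surjective g
  rw [MonoidHom.mem_ker, parityHom_apply, ← ofAdd_zero, EmbeddingLike.apply_eq_iff_eq] at hg
  obtain ⟨hx, hy, rfl⟩ : (x : ZMod 2) = 0 ∧ (y : ZMod 2) = 0 ∧ ε = 0 := by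
    simpa only [Prod.mk_eq_zero] using hg
  exact hf.apply_mem_commutator (ZMod.intCast_eq_zero_iff_even.mp hx)
    (ZMod.intCast_eq_zero_iff_even.mp hy) z

end IsHeisenbergSemidirect

/-- For `Γ = L₃ ⋊ ℤ/2ℤ` where `ℤ/2ℤ` acts on the integral
Heisenberg group by `H_{x,y,z} ↦ H_{−x,−y,z}` (modelled as a group `G` with
underlying set `ℤ³ × ℤ/2ℤ` and the semidirect product multiplication), the
abelianization of `Γ` is isomorphic to `(ℤ/2ℤ)³`. -/
theorem stmt12 (G : Type*) [Group G] (f : (ℤ × ℤ × ℤ) × ZMod 2 ≃ G)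
    (hmul : ∀ (x y z x' y' z' : ℤ) (ε ε' : ZMod 2),
      f ((x, y, z), ε) * f ((x', y', z'), ε') =
        f ((x + (if ε = 0 then (1 : ℤ) else -1) * x',
            y + (if ε = 0 then (1 : ℤ) else -1) * y',
            z + z' + x * ((if ε = 0 then (1 : ℤ) else -1) * y')), ε + ε')) :
    Nonempty (Abelianization G ≃* Multiplicative (ZMod 2 × ZMod 2 × ZMod 2)) := by
  have hf : IsHeisenbergSemidirect f := hmul
  exact ⟨Abelianization.mulEquivOfSurjective _ hf.parityHom_surjective hf.ker_parityHom_le⟩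
end

section
/- With the Riemannian Dirac current U_φ ∈ T_pM defined by g(U_φ, X) = ⟨e₀·X·φ, φ⟩ and the Lorentzian Dirac current V_φ := −U_φ + u_φ e₀ with u_φ = ‖φ‖², one has ‖V_φ · φ‖² = −ḡ(V_φ, V_φ)·‖φ‖². Consequently, for φ ≠ 0 the vector V_φ is nonzero, causal (i.e. ḡ(V_φ, V_φ) ≤ 0), and if V_φ is lightlike then V_φ · φ = 0. -/
/-!
Expand `‖V·φ‖² = ‖u Aφ - c(U) φ‖²`. Since `A` is a self-adjoint involution it is an isometry, and
since `c(U)` is skew-adjoint with `c(U)² = -‖U‖²`, `‖c(U) φ‖ = ‖U‖ ‖φ‖`. The cross term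
`Re ⟪Aφ, c(U) φ⟫` is `g(U, U) = ‖U‖²` by the definition of `U`. With `u = ‖φ‖²` the three terms
combine to `(u² - ‖U‖²) ‖φ‖²`; for `φ ≠ 0` its nonnegativity is causality, and its vanishing in
the lightlike case forces `V·φ = 0`.
-/

open scoped InnerProductSpace

section

variable {S : Type*} [NormedAddCommGroup S] [InnerProductSpace ℂ S]

theorem norm_apply_eq_of_selfAdjoint_involutive {A : Module.End ℂ S}
    (hA2 : ∀ v, A (A v) = v) (hAsa : ∀ v w, ⟪A v, w⟫_ℂ = ⟪v, A w⟫_ℂ) (v : S) :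
    ‖A v‖ = ‖v‖ := by
  rw [← sq_eq_sq₀ (norm_nonneg _) (norm_nonneg _), ← inner_self_eq_norm_sq (𝕜 := ℂ),
    ← inner_self_eq_norm_sq (𝕜 := ℂ), hAsa, hA2]

theorem norm_apply_sq_of_skewAdjoint_of_sq_eq_neg {T : Module.End ℂ S} {r : ℝ}
    (hskew : ∀ v w, ⟪T v, w⟫_ℂ = -⟪v, T w⟫_ℂ) (hsq : ∀ v, T (T v) = -((r : ℂ) ^ 2) • v)
    (v : S) : ‖T v‖ ^ 2 = r ^ 2 * ‖v‖ ^ 2 := by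
  rw [← inner_self_eq_norm_sq (𝕜 := ℂ), ← inner_self_eq_norm_sq (𝕜 := ℂ), hskew, hsq,
    inner_smul_right, neg_mul, neg_neg, ← Complex.ofReal_pow, RCLike.re_to_complex,
    RCLike.re_to_complex, Complex.re_ofReal_mul]

theorem norm_neg_add_ofReal_smul_sq (x y : S) (a : ℝ) :
    ‖-x + (a : ℂ) • y‖ ^ 2 = a ^ 2 * ‖y‖ ^ 2 - 2 * a * (⟪y, x⟫_ℂ).re + ‖x‖ ^ 2 := by
  rw [neg_add_eq_sub, @norm_sub_sq ℂ, norm_smul, inner_smul_left, Complex.conj_ofReal,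
    RCLike.re_to_complex, Complex.re_ofReal_mul, Complex.norm_real, Real.norm_eq_abs, mul_pow,
    sq_abs]
  ring

end

theorem stmt14_general (n : ℕ) (S : Type*) [NormedAddCommGroup S] [InnerProductSpace ℂ S]
    (c : EuclideanSpace ℝ (Fin n) → Module.End ℂ S) (A : Module.End ℂ S)
    (hA2 : ∀ v, A (A v) = v)
    (hAsa : ∀ v w, (inner ℂ (A v) w : ℂ) = inner ℂ v (A w))
    (hskew : ∀ X v w, (inner ℂ (c X v) w : ℂ) = -inner ℂ v (c X w))
    (hcliff : ∀ X v, c X (c X v) = -((‖X‖ : ℂ) ^ 2) • v)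
    (φ : S) (U : EuclideanSpace ℝ (Fin n)) (u : ℝ)
    (hu : u = ‖φ‖ ^ 2)
    (hU : ∀ X, (inner ℝ U X : ℝ) = (inner ℂ (A (c X φ)) φ : ℂ).re) :
    ‖-(c U φ) + (u : ℂ) • A φ‖ ^ 2 = (u ^ 2 - ‖U‖ ^ 2) * ‖φ‖ ^ 2 ∧
    (φ ≠ 0 →
      ¬(U = 0 ∧ u = 0) ∧ ‖U‖ ^ 2 - u ^ 2 ≤ 0 ∧
        (‖U‖ ^ 2 = u ^ 2 → -(c U φ) + (u : ℂ) • A φ = 0)) := by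
  have hcross : (⟪A φ, c U φ⟫_ℂ).re = ‖U‖ ^ 2 := by
    rw [← real_inner_self_eq_norm_sq, hU, hAsa]
    exact inner_re_symm (𝕜 := ℂ) _ _
  have hV : ‖-(c U φ) + (u : ℂ) • A φ‖ ^ 2 = (u ^ 2 - ‖U‖ ^ 2) * ‖φ‖ ^ 2 := by
    rw [norm_neg_add_ofReal_smul_sq, norm_apply_eq_of_selfAdjoint_involutive hA2 hAsa,
      norm_apply_sq_of_skewAdjoint_of_sq_eq_neg (hskew U) (hcliff U), hcross, ← hu]
    ring
  refine ⟨hV, fun hφ => ?_⟩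
  have hφ2 : 0 < ‖φ‖ ^ 2 := by positivity
  refine ⟨fun ⟨_, hu0⟩ => hφ2.ne' (hu ▸ hu0), ?_, fun hlight => ?_⟩
  · have := (mul_nonneg_iff_of_pos_right hφ2).mp (hV ▸ sq_nonneg _)
    linarith
  · rw [sub_eq_zero.mpr hlight.symm, zero_mul, sq_eq_zero_iff, norm_eq_zero] at hV
    exact hV

/-- With the Riemannian Dirac current `U_φ` defined by
`g(U_φ, X) = ⟨e₀·X·φ, φ⟩` and the Lorentzian Dirac current
`V_φ = −U_φ + u_φ e₀` with `u_φ = ‖φ‖²`, one has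
`‖V_φ·φ‖² = −ḡ(V_φ, V_φ)·‖φ‖² = (u_φ² − ‖U_φ‖²)·‖φ‖²`. Consequently, for
`φ ≠ 0` the vector `V_φ` is nonzero and causal (`ḡ(V_φ,V_φ) ≤ 0`, i.e.
`‖U_φ‖² ≤ u_φ²`), and if `V_φ` is lightlike then `V_φ·φ = 0`.
Clifford multiplication by spacelike vectors is `c`, by `e₀` is `A`. -/
theorem stmt14 (n : ℕ) (S : Type*) [NormedAddCommGroup S] [InnerProductSpace ℂ S]
    (c : EuclideanSpace ℝ (Fin n) → Module.End ℂ S) (A : Module.End ℂ S)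
    (hA2 : ∀ v, A (A v) = v)
    (hAsa : ∀ v w, (inner ℂ (A v) w : ℂ) = inner ℂ v (A w))
    (hskew : ∀ X v w, (inner ℂ (c X v) w : ℂ) = -inner ℂ v (c X w))
    (hanti : ∀ X v, A (c X v) = -c X (A v))
    (hcliff : ∀ X v, c X (c X v) = -((‖X‖ : ℂ) ^ 2) • v)
    (φ : S) (U : EuclideanSpace ℝ (Fin n)) (u : ℝ)
    (hu : u = ‖φ‖ ^ 2)
    (hU : ∀ X, (inner ℝ U X : ℝ) = (inner ℂ (A (c X φ)) φ : ℂ).re) :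
    ‖-(c U φ) + (u : ℂ) • A φ‖ ^ 2 = (u ^ 2 - ‖U‖ ^ 2) * ‖φ‖ ^ 2 ∧
    (φ ≠ 0 →
      ¬(U = 0 ∧ u = 0) ∧ ‖U‖ ^ 2 - u ^ 2 ≤ 0 ∧
        (‖U‖ ^ 2 = u ^ 2 → -(c U φ) + (u : ℂ) • A φ = 0)) :=
  stmt14_general n S c A hA2 hAsa hskew hcliff φ U u hu hU
end

section
/- In the algebraic setting of the hypersurface spinor module, if ρ ∈ ℝ, j ∈ ℝⁿ and φ ≠ 0 satisfy (ρ e₀ − j)·φ = 0 (Clifford multiplication) and ρ ≥ ‖j‖, and if additionally ρ U_φ = u_φ j and the vector V_φ = −U_φ + u_φ e₀ is timelike, then ρ = 0 and j = 0. -/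
/-!
Taking norms in `ρ • A φ = c j φ` gives `|ρ| ‖φ‖ = ‖j‖ ‖φ‖`, since `e₀` acts isometrically and a
spacelike `X` scales norms by `‖X‖`; so `ρ e₀ - j` is lightlike. Taking norms in `ρ • U = u • j`
then gives `|ρ| ‖U‖ = |u| |ρ|`, which forces `ρ = 0` because `‖U‖ < |u|`.
-/

section SpinorModule

variable {S : Type*} [NormedAddCommGroup S] [InnerProductSpace ℂ S]

theorem norm_apply_of_involutive_of_selfAdjoint {A : S → S} (hA2 : ∀ v, A (A v) = v)
    (hAsa : ∀ v w, (inner ℂ (A v) w : ℂ) = inner ℂ v (A w)) (v : S) : ‖A v‖ = ‖v‖ := by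
  rw [← sq_eq_sq₀ (norm_nonneg _) (norm_nonneg _), norm_sq_eq_re_inner (𝕜 := ℂ),
    norm_sq_eq_re_inner (𝕜 := ℂ), hAsa, hA2]

theorem norm_apply_of_skew_of_sq_eq {T : S → S} {r : ℝ}
    (hskew : ∀ v w, (inner ℂ (T v) w : ℂ) = -inner ℂ v (T w))
    (hsq : ∀ v, T (T v) = -((r : ℂ) ^ 2) • v) (v : S) : ‖T v‖ = |r| * ‖v‖ := by
  rw [← sq_eq_sq₀ (norm_nonneg _) (by positivity), mul_pow, sq_abs, norm_sq_eq_re_inner (𝕜 := ℂ),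
    norm_sq_eq_re_inner (𝕜 := ℂ), hskew, hsq, inner_smul_right, neg_mul, neg_neg,
    ← Complex.ofReal_pow]
  exact Complex.re_ofReal_mul _ _

end SpinorModule

theorem eq_zero_of_smul_eq_smul_of_norm_lt {E : Type*} [NormedAddCommGroup E] [NormedSpace ℝ E]
    {ρ u : ℝ} {U j : E} (hprop : ρ • U = u • j) (htime : ‖U‖ < |u|) (hj : |ρ| = ‖j‖) :
    ρ = 0 := by
  have h : |ρ| * ‖U‖ = |ρ| * |u| := by
    simpa only [norm_smul, Real.norm_eq_abs, ← hj, mul_comm |u|] using congrArg norm hprop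
  have h' : |ρ| * (|u| - ‖U‖) = 0 := by linarith
  exact abs_eq_zero.mp ((mul_eq_zero.mp h').resolve_right (by linarith))

theorem stmt15_general (n : ℕ) (S : Type*) [NormedAddCommGroup S] [InnerProductSpace ℂ S]
    (c : EuclideanSpace ℝ (Fin n) → Module.End ℂ S) (A : Module.End ℂ S)
    (hA2 : ∀ v, A (A v) = v)
    (hAsa : ∀ v w, (inner ℂ (A v) w : ℂ) = inner ℂ v (A w))
    (hskew : ∀ X v w, (inner ℂ (c X v) w : ℂ) = -inner ℂ v (c X w))
    (hcliff : ∀ X v, c X (c X v) = -((‖X‖ : ℂ) ^ 2) • v)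
    (φ : S) (hφ : φ ≠ 0) (U : EuclideanSpace ℝ (Fin n)) (u : ℝ)
    (ρ : ℝ) (j : EuclideanSpace ℝ (Fin n))
    (h0 : (ρ : ℂ) • A φ - c j φ = 0)
    (hprop : ρ • U = u • j)
    (htime : ‖U‖ ^ 2 < u ^ 2) :
    ρ = 0 ∧ j = 0 := by
  have hlight : |ρ| * ‖φ‖ = ‖j‖ * ‖φ‖ := by
    have h := congrArg norm (sub_eq_zero.mp h0)
    rwa [norm_smul, norm_apply_of_involutive_of_selfAdjoint hA2 hAsa,
      norm_apply_of_skew_of_sq_eq (hskew j) (hcliff j), abs_norm, Complex.norm_real,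
      Real.norm_eq_abs] at h
  have hρj : |ρ| = ‖j‖ := mul_right_cancel₀ (norm_ne_zero_iff.mpr hφ) hlight
  have hUu : ‖U‖ < |u| := by simpa only [abs_norm] using sq_lt_sq.mp htime
  have hρ : ρ = 0 := eq_zero_of_smul_eq_smul_of_norm_lt hprop hUu hρj
  exact ⟨hρ, norm_eq_zero.mp (by rw [← hρj, hρ, abs_zero])⟩

/-- In the hypersurface spinor module (Clifford multiplication
`c` by spacelike vectors, `A` by `e₀`), if `ρ ∈ ℝ`, `j ∈ ℝⁿ` and `φ ≠ 0` satisfy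
`(ρe₀ − j)·φ = 0` and `ρ ≥ ‖j‖`, and if moreover `ρ U_φ = u_φ j` and
`V_φ = −U_φ + u_φ e₀` is timelike (`‖U_φ‖² < u_φ²`), then `ρ = 0` and `j = 0`. -/
theorem stmt15 (n : ℕ) (S : Type*) [NormedAddCommGroup S] [InnerProductSpace ℂ S]
    (c : EuclideanSpace ℝ (Fin n) → Module.End ℂ S) (A : Module.End ℂ S)
    (hA2 : ∀ v, A (A v) = v)
    (hAsa : ∀ v w, (inner ℂ (A v) w : ℂ) = inner ℂ v (A w))
    (hskew : ∀ X v w, (inner ℂ (c X v) w : ℂ) = -inner ℂ v (c X w))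
    (hanti : ∀ X v, A (c X v) = -c X (A v))
    (hcliff : ∀ X v, c X (c X v) = -((‖X‖ : ℂ) ^ 2) • v)
    (φ : S) (hφ : φ ≠ 0) (U : EuclideanSpace ℝ (Fin n)) (u : ℝ)
    (hu : u = ‖φ‖ ^ 2)
    (hU : ∀ X, (inner ℝ U X : ℝ) = (inner ℂ (A (c X φ)) φ : ℂ).re)
    (ρ : ℝ) (j : EuclideanSpace ℝ (Fin n))
    (h0 : (ρ : ℂ) • A φ - c j φ = 0)
    (hdec : ‖j‖ ≤ ρ)
    (hprop : ρ • U = u • j)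
    (htime : ‖U‖ ^ 2 < u ^ 2) :
    ρ = 0 ∧ j = 0 :=
  stmt15_general n S c A hA2 hAsa hskew hcliff φ hφ U u ρ j h0 hprop htime
end

section
/- For a spinor φ on the hypersurface spinor bundle, the identity g(ρ U_φ, X) = g(u_φ j^♯, X) holds for all tangent vectors X, provided (ρ e₀ − j^♯)·φ = 0; i.e. ρ U_φ = u_φ j^♯. -/
/-!
Multiplying the defining identity of `U_φ` by `ρ` and using that `e₀` is self-adjoint turns
`ρ⟨e₀·X·φ, φ⟩` into `⟨X·φ, ρe₀·φ⟩ = ⟨X·φ, j♯·φ⟩`. Skew-adjointness of Clifford multiplication and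
the polarized Clifford relation `X·Y + Y·X = -2g(X, Y)` identify the real part of `⟨X·φ, Y·φ⟩`
with `g(X, Y)‖φ‖²`, so `g(ρU_φ, X) = ‖φ‖² g(j♯, X)` for every `X`.
-/

section Clifford

variable {V S : Type*} [NormedAddCommGroup V] [InnerProductSpace ℝ V]
  [NormedAddCommGroup S] [InnerProductSpace ℂ S] {c : V → Module.End ℂ S}

theorem clifford_polarization (hadd : ∀ X Y, c (X + Y) = c X + c Y)
    (hcliff : ∀ X v, c X (c X v) = -((‖X‖ : ℂ) ^ 2) • v) (X Y : V) (v : S) :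
    c X (c Y v) + c Y (c X v) = -((2 * inner ℝ X Y : ℝ) : ℂ) • v := by
  have hsum := hcliff (X + Y) v
  simp only [hadd, LinearMap.add_apply, map_add, hcliff] at hsum
  have hnorm : ((‖X + Y‖ : ℝ) : ℂ) ^ 2
      = (‖X‖ : ℂ) ^ 2 + ((2 * inner ℝ X Y : ℝ) : ℂ) + (‖Y‖ : ℂ) ^ 2 := by
    exact_mod_cast congrArg ((↑) : ℝ → ℂ) (norm_add_sq_real X Y)
  rw [hnorm] at hsum
  linear_combination (norm := module) hsum

theorem re_inner_clifford_clifford (hadd : ∀ X Y, c (X + Y) = c X + c Y)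
    (hskew : ∀ X v w, (inner ℂ (c X v) w : ℂ) = -inner ℂ v (c X w))
    (hcliff : ∀ X v, c X (c X v) = -((‖X‖ : ℂ) ^ 2) • v) (X Y : V) (φ : S) :
    (inner ℂ (c X φ) (c Y φ) : ℂ).re = inner ℝ X Y * ‖φ‖ ^ 2 := by
  have hsymm : (inner ℂ (c X φ) (c Y φ) : ℂ).re + (inner ℂ (c Y φ) (c X φ) : ℂ).re
      = 2 * inner ℝ X Y * ‖φ‖ ^ 2 := by
    rw [← Complex.add_re, hskew X, hskew Y, ← neg_add, ← inner_add_right,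
      clifford_polarization hadd hcliff, inner_smul_right, neg_mul, neg_neg,
      Complex.re_ofReal_mul, ← RCLike.re_to_complex, inner_self_eq_norm_sq, mul_assoc]
  rw [← inner_conj_symm (c X φ), Complex.conj_re] at hsymm ⊢
  linarith

end Clifford

theorem stmt16_general (n : ℕ) (S : Type*) [NormedAddCommGroup S] [InnerProductSpace ℂ S]
    (c : EuclideanSpace ℝ (Fin n) → Module.End ℂ S) (A : Module.End ℂ S)
    (hadd : ∀ X Y, c (X + Y) = c X + c Y)
    (hAsa : ∀ v w, (inner ℂ (A v) w : ℂ) = inner ℂ v (A w))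
    (hskew : ∀ X v w, (inner ℂ (c X v) w : ℂ) = -inner ℂ v (c X w))
    (hcliff : ∀ X v, c X (c X v) = -((‖X‖ : ℂ) ^ 2) • v)
    (φ : S) (U : EuclideanSpace ℝ (Fin n)) (u : ℝ)
    (hu : u = ‖φ‖ ^ 2)
    (hU : ∀ X, (inner ℝ U X : ℝ) = (inner ℂ (A (c X φ)) φ : ℂ).re)
    (ρ : ℝ) (j : EuclideanSpace ℝ (Fin n))
    (h0 : (ρ : ℂ) • A φ - c j φ = 0) :
    ρ • U = u • j := by
  refine ext_inner_right ℝ fun X => ?_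
  have hρA : (ρ : ℂ) • A φ = c j φ := sub_eq_zero.mp h0
  calc inner ℝ (ρ • U) X
      = ((ρ : ℂ) * inner ℂ (A (c X φ)) φ).re := by
        rw [real_inner_smul_left, hU, Complex.re_ofReal_mul]
    _ = (inner ℂ (c X φ) (c j φ) : ℂ).re := by rw [hAsa, ← inner_smul_right, hρA]
    _ = inner ℝ (u • j) X := by
        rw [re_inner_clifford_clifford hadd hskew hcliff, real_inner_smul_left, hu,
          real_inner_comm]
        ring

/-- In the hypersurface spinor module, if `(ρe₀ − j♯)·φ = 0`, then
`g(ρ U_φ, X) = g(u_φ j♯, X)` for all tangent vectors `X`, i.e.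
`ρ U_φ = u_φ j♯`, where `U_φ` is defined by `g(U_φ, X) = Re⟨e₀·X·φ, φ⟩` and
`u_φ = ‖φ‖²`. -/
theorem stmt16 (n : ℕ) (S : Type*) [NormedAddCommGroup S] [InnerProductSpace ℂ S]
    (c : EuclideanSpace ℝ (Fin n) → Module.End ℂ S) (A : Module.End ℂ S)
    (hadd : ∀ X Y, c (X + Y) = c X + c Y)
    (hAsa : ∀ v w, (inner ℂ (A v) w : ℂ) = inner ℂ v (A w))
    (hskew : ∀ X v w, (inner ℂ (c X v) w : ℂ) = -inner ℂ v (c X w))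
    (hanti : ∀ X v, A (c X v) = -c X (A v))
    (hcliff : ∀ X v, c X (c X v) = -((‖X‖ : ℂ) ^ 2) • v)
    (φ : S) (U : EuclideanSpace ℝ (Fin n)) (u : ℝ)
    (hu : u = ‖φ‖ ^ 2)
    (hU : ∀ X, (inner ℝ U X : ℝ) = (inner ℂ (A (c X φ)) φ : ℂ).re)
    (ρ : ℝ) (j : EuclideanSpace ℝ (Fin n))
    (h0 : (ρ : ℂ) • A φ - c j φ = 0) :
    ρ • U = u • j :=
  stmt16_general n S c A hadd hAsa hskew hcliff φ U u hu hU ρ j h0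
end
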